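/- arXiv:2207.14108 — 5 statements merged into one kernel-verified Lean document; each statement's English description precedes it below -/
import Mathlib

section
/- The number of functions f : Fin n → Fin n with exactly one cyclic point (i.e. exactly one x with f^[k] x = x for some k ≥ 1) equals n^(n-1), for n ≥ 1. -/
/-!
Joyal's bijection. The cyclic points of `g : α → α`, listed in increasing order and each replaced
by its image, spell the permutation `g` of its cyclic points as a word. Rewiring these points
into a path along that word, ending in a loop, gives a function with a single cyclic point, and
the first letter of the word is recorded as a marked point. Conversely, the path from the marked
point to the cyclic point of a loop-rooted tree, read as a word, is turned back into a
permutation of its points. Hence `n ^ n = n * #{loop-rooted trees}`.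
-/

open Function Set

namespace List

variable {α : Type*} [DecidableEq α]

/-- `a.relabel b g` sends `a[i]` to `b[i]`, fixes the entries of `a` past the length of `b`,
and agrees with `g` off `a`. -/
def relabel (a b : List α) (g : α → α) (x : α) : α :=
  if x ∈ a then b.getD (a.idxOf x) x else g x

variable {a b : List α} {g h : α → α}

theorem relabel_of_not_mem {x : α} (hx : x ∉ a) : a.relabel b g x = g x := if_neg hx

theorem relabel_congr (hgh : ∀ x ∉ a, g x = h x) : a.relabel b g = a.relabel b h := by
  funext x
  by_cases hx : x ∈ a
  · simp only [relabel, if_pos hx]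
  · rw [relabel_of_not_mem hx, relabel_of_not_mem hx, hgh x hx]

theorem Nodup.relabel_getElem (ha : a.Nodup) {i : ℕ} (hia : i < a.length) (hib : i < b.length) :
    a.relabel b g a[i] = b[i] := by
  rw [relabel, if_pos (getElem_mem hia), ha.idxOf_getElem, getD_eq_getElem]

theorem mapsTo_relabel (hab : a.length ≤ b.length) :
    MapsTo (a.relabel b g) {x | x ∈ a} {x | x ∈ b} := by
  rintro x (hx : x ∈ a)
  have hidx : a.idxOf x < b.length := by rw [← idxOf_lt_length_iff] at hx; omega
  rw [Set.mem_ofPred_eq, relabel, if_pos hx, getD_eq_getElem _ _ hidx]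
  exact getElem_mem _

theorem Nodup.injOn_relabel (ha : a.Nodup) (hb : b.Nodup) (hab : a.length ≤ b.length) :
    InjOn (a.relabel b g) {x | x ∈ a} := by
  rintro _ hx _ hy hxy
  obtain ⟨i, hi, rfl⟩ := getElem_of_mem hx
  obtain ⟨j, hj, rfl⟩ := getElem_of_mem hy
  rw [ha.relabel_getElem hi (by omega), ha.relabel_getElem hj (by omega),
    hb.getElem_inj_iff] at hxy
  simp only [hxy]

theorem Nodup.map_relabel (ha : a.Nodup) (hab : a.length = b.length) :
    a.map (a.relabel b g) = b :=
  ext_getElem (by rw [length_map, hab]) fun i hi _ => by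
    rw [getElem_map, ha.relabel_getElem (by simpa using hi)]

theorem Nodup.relabel_map (ha : a.Nodup) (hgh : ∀ x ∉ a, h x = g x) :
    a.relabel (a.map g) h = g := by
  funext x
  by_cases hx : x ∈ a
  · obtain ⟨i, hi, rfl⟩ := getElem_of_mem hx
    rw [ha.relabel_getElem hi (by simpa using hi), getElem_map]
  · rw [relabel_of_not_mem hx, hgh x hx]

theorem Nodup.relabel_tail_getElem (ha : a.Nodup) {i : ℕ} (hi : i + 1 < a.length) :
    a.relabel a.tail g a[i] = a[i + 1] := by
  rw [ha.relabel_getElem _ (by rw [length_tail]; omega), getElem_tail]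

theorem Nodup.relabel_tail_getLast (ha : a.Nodup) (hne : a ≠ []) :
    a.relabel a.tail g (a.getLast hne) = a.getLast hne := by
  rw [relabel, if_pos (getLast_mem hne), getLast_eq_getElem, ha.idxOf_getElem,
    getD_eq_default _ _ (by rw [length_tail])]

theorem Nodup.iterate_relabel_tail (ha : a.Nodup) {i k : ℕ} (hik : i + k < a.length) :
    (a.relabel a.tail g)^[k] a[i] = a[i + k] := by
  induction k with
  | zero => rfl
  | succ k ih => rw [iterate_succ_apply', ih (by omega), ha.relabel_tail_getElem]; rfl

theorem Nodup.relabel_tail_eq_self (ha : a.Nodup) (hne : a ≠ [])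
    (hstep : ∀ i (hi : i + 1 < a.length), g a[i] = a[i + 1])
    (hlast : g (a.getLast hne) = a.getLast hne) : a.relabel a.tail g = g := by
  funext x
  by_cases hx : x ∈ a
  · obtain ⟨i, hi, rfl⟩ := getElem_of_mem hx
    rcases Nat.lt_or_ge (i + 1) a.length with hlt | hge
    · rw [ha.relabel_tail_getElem hlt, hstep i hlt]
    · have hlast' : a[i] = a.getLast hne := by rw [getLast_eq_getElem]; congr 1; omega
      rw [hlast', ha.relabel_tail_getLast, hlast]
  · exact relabel_of_not_mem hx

end List

section Dynamics

variable {α : Type*} {f g : α → α} {s : Set α} {x r : α}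

theorem Function.exists_iterate_mem_periodicPts [Finite α] (f : α → α) (x : α) :
    ∃ n, f^[n] x ∈ periodicPts f := by
  obtain ⟨m, n, hne, heq⟩ := Finite.exists_ne_map_eq_of_infinite (f^[·] x)
  wlog hmn : m < n generalizing m n
  · exact this n m hne.symm heq.symm (by omega)
  refine ⟨m, mk_mem_periodicPts (n := n - m) (by omega) ?_⟩
  rw [IsPeriodicPt, IsFixedPt, ← iterate_add_apply, Nat.sub_add_cancel hmn.le]
  exact heq.symm

theorem Function.periodicPts_eq_singleton_of_forall_exists_iterate_eq (hr : f r = r)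
    (h : ∀ x, ∃ n, f^[n] x = r) : periodicPts f = {r} := by
  refine eq_singleton_iff_unique_mem.2 ⟨mk_mem_periodicPts one_pos hr, fun x hx => ?_⟩
  obtain ⟨k, hk, hper⟩ := mem_periodicPts.1 hx
  obtain ⟨n, hn⟩ := h x
  calc x = f^[k * n - n + n] x := by
        rw [Nat.sub_add_cancel (Nat.le_mul_of_pos_left n hk)]; exact (hper.mul_const n).eq.symm
    _ = r := by rw [iterate_add_apply, hn, iterate_fixed hr]

theorem Function.apply_eq_of_periodicPts_eq_singleton (h : periodicPts f = {r}) : f r = r := by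
  simpa [h] using (bijOn_periodicPts f).mapsTo (h ▸ rfl : r ∈ periodicPts f)

theorem Function.iterate_eq_of_eqOn_compl (hfg : EqOn f g sᶜ) {n : ℕ}
    (hx : ∀ j < n, g^[j] x ∉ s) : f^[n] x = g^[n] x := by
  induction n with
  | zero => rfl
  | succ n ih =>
    rw [iterate_succ_apply', iterate_succ_apply', ih fun j hj => hx j (by omega),
      hfg (hx n (by omega))]

theorem Function.exists_iterate_mem_of_eqOn_compl (hfg : EqOn f g sᶜ)
    (hx : ∃ n, g^[n] x ∈ s) : ∃ n, f^[n] x ∈ s := by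
  classical
  refine ⟨Nat.find hx, ?_⟩
  rw [iterate_eq_of_eqOn_compl hfg fun j hj => Nat.find_min hx hj]
  exact Nat.find_spec hx

theorem Function.periodicPts_subset_union_of_eqOn_compl (hg : MapsTo g s s)
    (hfg : EqOn f g sᶜ) : periodicPts g ⊆ s ∪ periodicPts f := by
  intro x hx
  obtain ⟨k, hk, hper⟩ := mem_periodicPts.1 hx
  by_cases hs : ∃ j < k, g^[j] x ∈ s
  · obtain ⟨j, hj, hjs⟩ := hs
    have hback : g^[k - j] (g^[j] x) = x := by
      rw [← iterate_add_apply, Nat.sub_add_cancel hj.le]; exact hper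
    exact Or.inl (hback ▸ hg.iterate _ hjs)
  · push Not at hs
    exact Or.inr (mk_mem_periodicPts hk ((iterate_eq_of_eqOn_compl hfg hs).trans hper))

theorem Set.InjOn.subset_periodicPts (hs : s.Finite) (hmaps : MapsTo f s s) (hinj : InjOn f s) :
    s ⊆ periodicPts f := by
  have : Finite s := hs
  intro x hx
  exact Semiconj.mapsTo_periodicPts (g := Subtype.val) (fa := hmaps.restrict f s s) (fb := f)
    (fun _ => rfl) ((hmaps.restrict_inj.2 hinj).mem_periodicPts ⟨x, hx⟩)

end Dynamics

namespace Joyal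

section PathToPeriodic

open scoped Classical

variable {α : Type*} [Finite α]

noncomputable def pathToPeriodic (f : α → α) (y : α) : List α :=
  List.iterate f y (Nat.find (exists_iterate_mem_periodicPts f y) + 1)

variable (f : α → α) (y : α)

theorem length_pathToPeriodic :
    (pathToPeriodic f y).length = Nat.find (exists_iterate_mem_periodicPts f y) + 1 :=
  List.length_iterate ..

theorem getElem_pathToPeriodic {i : ℕ} (hi : i < (pathToPeriodic f y).length) :
    (pathToPeriodic f y)[i] = f^[i] y :=
  List.getElem_iterate ..

theorem pathToPeriodic_ne_nil : pathToPeriodic f y ≠ [] :=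
  List.ne_nil_of_length_pos (by rw [length_pathToPeriodic]; omega)

theorem getLast_pathToPeriodic_mem :
    (pathToPeriodic f y).getLast (pathToPeriodic_ne_nil f y) ∈ periodicPts f := by
  rw [List.getLast_eq_getElem, getElem_pathToPeriodic]
  convert Nat.find_spec (exists_iterate_mem_periodicPts f y)
  rw [length_pathToPeriodic]
  rfl

theorem nodup_pathToPeriodic : (pathToPeriodic f y).Nodup := by
  refine List.nodup_iff_injective_get.2 fun ⟨i, hi⟩ ⟨j, hj⟩ hij => ?_
  simp only [List.get_eq_getElem, getElem_pathToPeriodic] at hij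
  rw [length_pathToPeriodic] at hi hj
  -- a repetition `f^[i] y = f^[j] y` with `i < j` makes `f^[i] y` periodic too early
  have key : ∀ i j, i < j → j < Nat.find (exists_iterate_mem_periodicPts f y) + 1 →
      f^[i] y ≠ f^[j] y := fun i j hij hj heq =>
    Nat.find_min (exists_iterate_mem_periodicPts f y) (by omega : i < _)
      (mk_mem_periodicPts (n := j - i) (by omega) (by
        rw [IsPeriodicPt, IsFixedPt, ← iterate_add_apply, Nat.sub_add_cancel hij.le, heq]))
  rcases lt_trichotomy i j with hlt | rfl | hgt
  · exact absurd hij (key i j hlt hj)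
  · rfl
  · exact absurd hij.symm (key j i hgt hi)

theorem length_pathToPeriodic_eq {n : ℕ} (hn : f^[n] y ∈ periodicPts f)
    (hmin : ∀ m < n, f^[m] y ∉ periodicPts f) : (pathToPeriodic f y).length = n + 1 := by
  rw [length_pathToPeriodic, (Nat.find_eq_iff _).2 ⟨hn, hmin⟩]

end PathToPeriodic

variable {α : Type*} [LinearOrder α] [Fintype α]

noncomputable def sortedPeriodicPts (g : α → α) : List α :=
  (toFinite (periodicPts g)).toFinset.sort

theorem mem_sortedPeriodicPts {g : α → α} {x : α} :
    x ∈ sortedPeriodicPts g ↔ x ∈ periodicPts g := by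
  simp [sortedPeriodicPts]

/-- The permutation `g` of its cyclic points, written as a word. -/
noncomputable def spine (g : α → α) : List α := (sortedPeriodicPts g).map g

theorem nodup_spine (g : α → α) : (spine g).Nodup :=
  (Finset.sort_nodup _ _).map_on fun _ hx _ hy hxy =>
    (bijOn_periodicPts g).injOn (mem_sortedPeriodicPts.1 hx) (mem_sortedPeriodicPts.1 hy) hxy

theorem mem_spine {g : α → α} {x : α} : x ∈ spine g ↔ x ∈ periodicPts g := by
  simp only [spine, List.mem_map, mem_sortedPeriodicPts]
  exact ⟨fun ⟨y, hy, hyx⟩ => hyx ▸ (bijOn_periodicPts g).mapsTo hy,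
    fun hx => (bijOn_periodicPts g).surjOn hx⟩

theorem spine_ne_nil [Nonempty α] (g : α → α) : spine g ≠ [] := by
  obtain ⟨n, hn⟩ := exists_iterate_mem_periodicPts g (Classical.arbitrary α)
  exact List.ne_nil_of_mem (mem_spine.2 hn)

/-- Joyal's straightening: `g` with its cyclic points rerouted along the spine, which ends in a
loop. -/
noncomputable def toTree (g : α → α) : α → α := (spine g).relabel (spine g).tail g

/-- The inverse of `toTree`: the path from `y` to the root, read as a word, is turned into a
permutation of its points by matching it against their increasing order. -/
noncomputable def ofTree (f : α → α) (y : α) : α → α :=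
  (pathToPeriodic f y).toFinset.sort.relabel (pathToPeriodic f y) f

theorem periodicPts_toTree [Nonempty α] (g : α → α) :
    periodicPts (toTree g) = {(spine g).getLast (spine_ne_nil g)} := by
  have hl := nodup_spine g
  refine periodicPts_eq_singleton_of_forall_exists_iterate_eq
    (hl.relabel_tail_getLast (spine_ne_nil g)) fun x => ?_
  have hoff : EqOn (toTree g) g {y | y ∈ spine g}ᶜ := fun y hy => List.relabel_of_not_mem hy
  obtain ⟨n, hn⟩ := exists_iterate_mem_of_eqOn_compl hoff
    (by simpa only [mem_ofPred_eq, mem_spine] using exists_iterate_mem_periodicPts g x)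
  obtain ⟨i, hi, hix⟩ := List.getElem_of_mem hn
  refine ⟨(spine g).length - 1 - i + n, ?_⟩
  rw [iterate_add_apply, ← hix, toTree, hl.iterate_relabel_tail (by omega),
    List.getLast_eq_getElem]
  congr 1
  omega

theorem pathToPeriodic_toTree [Nonempty α] (g : α → α) :
    pathToPeriodic (toTree g) ((spine g).head (spine_ne_nil g)) = spine g := by
  have hl := nodup_spine g
  have hpos := List.length_pos_of_ne_nil (spine_ne_nil g)
  have hiter : ∀ i (hi : i < (spine g).length),
      (toTree g)^[i] ((spine g).head (spine_ne_nil g)) = (spine g)[i] := fun i hi => by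
    rw [List.head_eq_getElem, toTree, hl.iterate_relabel_tail (by omega)]
    simp only [Nat.zero_add]
  have hper : ∀ i (hi : i < (spine g).length),
      (spine g)[i] ∈ periodicPts (toTree g) ↔ i = (spine g).length - 1 := fun i hi => by
    rw [periodicPts_toTree, mem_singleton_iff, List.getLast_eq_getElem, hl.getElem_inj_iff]
  have hlen := length_pathToPeriodic_eq (n := (spine g).length - 1) (toTree g) _
    (by rw [hiter _ (by omega), hper]) fun m hm => by rw [hiter m (by omega), hper]; omega
  refine List.ext_getElem (by rw [hlen]; omega) fun i _ _ => ?_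
  rw [getElem_pathToPeriodic, hiter]

theorem ofTree_toTree [Nonempty α] (g : α → α) :
    ofTree (toTree g) ((spine g).head (spine_ne_nil g)) = g := by
  have hsort : (spine g).toFinset.sort = sortedPeriodicPts g := by
    unfold sortedPeriodicPts
    congr 1
    ext x
    simp [mem_spine]
  rw [ofTree, pathToPeriodic_toTree, hsort, spine]
  exact (Finset.sort_nodup _ _).relabel_map fun x hx =>
    List.relabel_of_not_mem (by rwa [mem_spine, ← mem_sortedPeriodicPts])

section OfTree

variable {f : α → α} {r : α} (hf : periodicPts f = {r}) (y : α)
include hf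

theorem periodicPts_ofTree : periodicPts (ofTree f y) = {x | x ∈ pathToPeriodic f y} := by
  set v := pathToPeriodic f y
  have hlen : (v.toFinset.sort).length = v.length := by
    rw [Finset.length_sort, List.toFinset_card_of_nodup (nodup_pathToPeriodic f y)]
  have hmem : {x | x ∈ v.toFinset.sort} = {x | x ∈ v} := by ext; simp
  have hmaps : MapsTo (ofTree f y) {x | x ∈ v} {x | x ∈ v} :=
    hmem ▸ List.mapsTo_relabel hlen.le
  have hoff : EqOn f (ofTree f y) {x | x ∈ v}ᶜ := fun x hx =>
    (List.relabel_of_not_mem (by simpa [v] using hx)).symm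
  have hroot : r ∈ {x | x ∈ v} := by
    have := getLast_pathToPeriodic_mem f y
    rw [hf, mem_singleton_iff] at this
    exact this ▸ List.getLast_mem _
  refine Subset.antisymm (fun x hx => ?_) ?_
  · rcases periodicPts_subset_union_of_eqOn_compl hmaps hoff hx with h | h
    · exact h
    · rw [hf, mem_singleton_iff] at h
      exact h ▸ hroot
  · exact InjOn.subset_periodicPts (toFinite _) hmaps
      (hmem ▸ (Finset.sort_nodup _ _).injOn_relabel (nodup_pathToPeriodic f y) hlen.le)

theorem spine_ofTree : spine (ofTree f y) = pathToPeriodic f y := by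
  have hsort : sortedPeriodicPts (ofTree f y) = (pathToPeriodic f y).toFinset.sort := by
    unfold sortedPeriodicPts
    congr 1
    ext x
    simp [periodicPts_ofTree hf]
  rw [spine, hsort]
  refine (Finset.sort_nodup _ _).map_relabel ?_
  rw [Finset.length_sort, List.toFinset_card_of_nodup (nodup_pathToPeriodic f y)]

theorem head_spine_ofTree (hne : spine (ofTree f y) ≠ []) :
    (spine (ofTree f y)).head hne = y := by
  simp only [spine_ofTree hf, List.head_eq_getElem, getElem_pathToPeriodic]
  rfl

theorem toTree_ofTree : toTree (ofTree f y) = f := by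
  have hne := pathToPeriodic_ne_nil f y
  rw [toTree, spine_ofTree hf, List.relabel_congr (g := ofTree f y) (h := f) fun x hx =>
    List.relabel_of_not_mem (by simpa using hx)]
  refine (nodup_pathToPeriodic f y).relabel_tail_eq_self hne (fun i hi => ?_) ?_
  · rw [getElem_pathToPeriodic, getElem_pathToPeriodic, iterate_succ_apply']
  · have hlast := getLast_pathToPeriodic_mem f y
    rw [hf, mem_singleton_iff] at hlast
    rw [hlast]
    exact apply_eq_of_periodicPts_eq_singleton hf

end OfTree

noncomputable def equiv [Nonempty α] :
    (α → α) ≃ {f : α → α // ∃! x, x ∈ periodicPts f} × α where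
  toFun g :=
    have hg := eq_singleton_iff_unique_mem.1 (periodicPts_toTree g)
    (⟨toTree g, _, hg.1, hg.2⟩, (spine g).head (spine_ne_nil g))
  invFun p := ofTree p.1.1 p.2
  left_inv := ofTree_toTree
  right_inv := by
    rintro ⟨⟨f, r, hr, huniq⟩, y⟩
    have hf : periodicPts f = {r} := eq_singleton_iff_unique_mem.2 ⟨hr, huniq⟩
    exact Prod.ext (Subtype.ext (toTree_ofTree hf y)) (head_spine_ofTree hf y _)

end Joyal

/-- The number of functions `f : Fin n → Fin n` with exactly one cyclic point
(a point `x` with `f^[k] x = x` for some `k ≥ 1`) equals `n^(n-1)`, for `n ≥ 1`. -/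
theorem stmt_0 (n : ℕ) (hn : 1 ≤ n) :
    Nat.card {f : Fin n → Fin n // ∃! x : Fin n, ∃ k : ℕ, 1 ≤ k ∧ f^[k] x = x} =
      n ^ (n - 1) := by
  have : Nonempty (Fin n) := ⟨⟨0, hn⟩⟩
  have hcard := Nat.card_congr (Joyal.equiv (α := Fin n))
  have hpow : n ^ n = n ^ (n - 1) * n := by rw [← pow_succ, Nat.sub_add_cancel hn]
  rw [Nat.card_fun, Nat.card_prod, Nat.card_fin, hpow] at hcard
  exact (Nat.eq_of_mul_eq_mul_right (by omega) hcard).symm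
end

section
/- For n ≥ 1, the probability that a uniformly random function f : Fin n → Fin n is a loop-rooted tree (has exactly one cyclic point) equals 1/n. -/
/-!
Joyal's bijection. The periodic points `c₁ < ⋯ < c_k` of `f` are permuted by `f`, so
`f c₁, …, f c_k` lists them again. Turning this list (the spine) into a path that ends in a
loop, and keeping `f` off the periodic points, gives a loop-rooted tree `g` together with a
marked point, the start `f c₁` of the path. Conversely, the path from the marked point to the
root of `g`, read against its own sorted version, is the one-line notation of the permutation
of the periodic points, which recovers `f`. Hence `n ^ n = n * #{loop-rooted trees}`.
-/

open Function Set

namespace List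

variable {α : Type*} [DecidableEq α]

/-- Sends `L[i]` to `L[i + 1]` and fixes the last entry of `L` (where `getD` falls back to `x`);
agrees with `f` off `L`. -/
def pathUpdate (L : List α) (f : α → α) (x : α) : α :=
  if x ∈ L then L.getD (L.idxOf x + 1) x else f x

def zipUpdate (s P : List α) (f : α → α) (x : α) : α :=
  if x ∈ s then P.getD (s.idxOf x) x else f x

variable {L s P : List α} {f : α → α} {x : α}

theorem pathUpdate_of_not_mem (hx : x ∉ L) : L.pathUpdate f x = f x := if_neg hx

theorem pathUpdate_getElem (hL : L.Nodup) {i : ℕ} (hi : i + 1 < L.length) :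
    L.pathUpdate f L[i] = L[i + 1] := by
  rw [pathUpdate, if_pos (getElem_mem _), hL.idxOf_getElem, getD_eq_getElem]

theorem pathUpdate_getLast (hL : L.Nodup) (h : L ≠ []) :
    L.pathUpdate f (L.getLast h) = L.getLast h := by
  rw [pathUpdate, if_pos (getLast_mem h), getLast_eq_getElem, hL.idxOf_getElem,
    getD_eq_default _ _ (by omega)]

theorem iterate_pathUpdate_getElem (hL : L.Nodup) {i j : ℕ} (h : i + j < L.length) :
    (L.pathUpdate f)^[j] L[i] = L[i + j] := by
  induction j with
  | zero => rfl
  | succ j ih =>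
    rw [iterate_succ_apply', ih (by omega), pathUpdate_getElem hL]
    rfl

theorem iterate_pathUpdate_head (hL : L.Nodup) (h : L ≠ []) :
    iterate (L.pathUpdate f) (L.head h) L.length = L :=
  ext_getElem (length_iterate ..) fun i _ hi => by
    rw [getElem_iterate, head_eq_getElem, iterate_pathUpdate_getElem hL (by omega)]
    simp only [zero_add]

theorem zipUpdate_of_not_mem (hx : x ∉ s) : s.zipUpdate P f x = f x := if_neg hx

theorem zipUpdate_getElem (hs : s.Nodup) (hlen : s.length = P.length) {i : ℕ}
    (hi : i < s.length) : s.zipUpdate P f s[i] = P[i] := by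
  rw [zipUpdate, if_pos (getElem_mem _), hs.idxOf_getElem, getD_eq_getElem]

theorem zipUpdate_of_mem (hlen : s.length = P.length) (hx : x ∈ s) :
    s.zipUpdate P f x = P[s.idxOf x]'(hlen ▸ idxOf_lt_length_iff.mpr hx) := by
  rw [zipUpdate, if_pos hx, getD_eq_getElem]

theorem mapsTo_zipUpdate (hlen : s.length = P.length) :
    MapsTo (s.zipUpdate P f) {x | x ∈ s} {x | x ∈ P} := fun x hx => by
  change s.zipUpdate P f x ∈ P
  rw [zipUpdate_of_mem hlen hx]
  exact getElem_mem _

theorem injOn_zipUpdate (hP : P.Nodup) (hlen : s.length = P.length) :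
    InjOn (s.zipUpdate P f) {x | x ∈ s} := fun x hx y hy hxy => by
  rw [zipUpdate_of_mem hlen hx, zipUpdate_of_mem hlen hy, hP.getElem_inj_iff] at hxy
  exact (idxOf_inj hx).mp hxy

end List

namespace Function

variable {α : Type*} {f g : α → α} {s : Set α} {x : α}

theorem iterate_mem_periodicPts_of_iterate_eq {i j : ℕ} (hij : i < j) (h : f^[i] x = f^[j] x) :
    f^[i] x ∈ periodicPts f := by
  refine mk_mem_periodicPts (n := j - i) (by omega) ?_
  change f^[j - i] (f^[i] x) = f^[i] x
  rw [← iterate_add_apply, Nat.sub_add_cancel hij.le, h]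

theorem exists_iterate_mem_periodicPts_s1 [Finite α] (f : α → α) (x : α) :
    ∃ n, f^[n] x ∈ periodicPts f := by
  obtain ⟨i, j, hij, heq⟩ := Finite.exists_ne_map_eq_of_infinite (fun n : ℕ => f^[n] x)
  rcases hij.lt_or_gt with hlt | hlt
  · exact ⟨i, iterate_mem_periodicPts_of_iterate_eq hlt heq⟩
  · exact ⟨j, iterate_mem_periodicPts_of_iterate_eq hlt heq.symm⟩

theorem exists_iterate_iterate_eq_of_mem_periodicPts (hx : x ∈ periodicPts f) (n : ℕ) :
    ∃ m, f^[m] (f^[n] x) = x := by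
  obtain ⟨k, hk, hkx⟩ := mem_periodicPts.mp hx
  refine ⟨k * n - n, ?_⟩
  rw [← iterate_add_apply, Nat.sub_add_cancel (Nat.le_mul_of_pos_left n hk)]
  exact hkx.mul_const n

theorem mem_of_mapsTo_of_iterate_mem (hs : MapsTo f s s) (hx : x ∈ periodicPts f) {n : ℕ}
    (hn : f^[n] x ∈ s) : x ∈ s := by
  obtain ⟨m, hm⟩ := exists_iterate_iterate_eq_of_mem_periodicPts hx n
  exact hm ▸ hs.iterate m hn

theorem subset_periodicPts_of_injOn [Finite α] (hs : MapsTo f s s) (hinj : InjOn f s) :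
    s ⊆ periodicPts f := fun x hx =>
  (Semiconj.mapsTo_periodicPts (fa := hs.restrict f s s) (fun y => hs.val_restrict_apply y))
    ((hs.restrict_inj.mpr hinj).mem_periodicPts ⟨x, hx⟩)

theorem exists_iterate_mem_of_eqOn_compl_s1 (h : EqOn g f sᶜ) {n : ℕ} (hn : f^[n] x ∈ s) :
    ∃ m, g^[m] x ∈ s := by
  induction n generalizing x with
  | zero => exact ⟨0, hn⟩
  | succ n ih =>
    by_cases hx : x ∈ s
    · exact ⟨0, hx⟩
    obtain ⟨m, hm⟩ := ih (x := f x) hn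
    exact ⟨m + 1, by rwa [iterate_succ_apply, h hx]⟩

def IsLoopRootedTree (f : α → α) : Prop := ∃! x, x ∈ periodicPts f

theorem isLoopRootedTree_of_isFixedPt {r : α} (hr : IsFixedPt f r)
    (hreach : ∀ x, ∃ n, f^[n] x = r) : IsLoopRootedTree f := by
  refine ⟨r, mk_mem_periodicPts one_pos hr, fun x hx => ?_⟩
  obtain ⟨n, hn⟩ := hreach x
  have hmaps : MapsTo f {r} {r} := by rintro _ rfl; exact hr
  exact mem_of_mapsTo_of_iterate_mem (s := {r}) hmaps hx hn

namespace IsLoopRootedTree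

variable (hg : IsLoopRootedTree g)

noncomputable def root : α := hg.exists.choose

theorem root_mem_periodicPts : hg.root ∈ periodicPts g := hg.exists.choose_spec

theorem eq_root (hx : x ∈ periodicPts g) : x = hg.root := hg.unique hx hg.root_mem_periodicPts

theorem isFixedPt_root : IsFixedPt g hg.root :=
  hg.eq_root ((bijOn_periodicPts g).mapsTo hg.root_mem_periodicPts)

variable [Finite α]

theorem exists_iterate_eq_root (x : α) : ∃ n, g^[n] x = hg.root :=
  (exists_iterate_mem_periodicPts_s1 g x).imp fun _ => hg.eq_root

open scoped Classical in
noncomputable def hitTime (x : α) : ℕ := Nat.find (hg.exists_iterate_eq_root x)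

noncomputable def rootPath (x : α) : List α := List.iterate g x (hg.hitTime x + 1)

open scoped Classical in
theorem iterate_hitTime (x : α) : g^[hg.hitTime x] x = hg.root :=
  Nat.find_spec (hg.exists_iterate_eq_root x)

open scoped Classical in
theorem hitTime_eq {n : ℕ} (hnd : (List.iterate g x (n + 1)).Nodup)
    (hn : g^[n] x ∈ periodicPts g) : hg.hitTime x = n := by
  refine (Nat.find_eq_iff _).mpr ⟨hg.eq_root hn, fun m hm hroot => hm.ne ?_⟩
  have hlen : m < (List.iterate g x (n + 1)).length := by simp; omega
  refine (hnd.getElem_inj_iff (hi := hlen) (hj := by simp)).mp ?_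
  rw [List.getElem_iterate, List.getElem_iterate, hroot, ← hg.eq_root hn]

theorem length_rootPath (x : α) : (hg.rootPath x).length = hg.hitTime x + 1 :=
  List.length_iterate ..

theorem getElem_rootPath (x : α) {i : ℕ} (hi : i < (hg.rootPath x).length) :
    (hg.rootPath x)[i] = g^[i] x :=
  List.getElem_iterate ..

open scoped Classical in
theorem nodup_rootPath (x : α) : (hg.rootPath x).Nodup := by
  refine List.pairwise_iff_getElem.mpr fun i j hi hj hij heq => ?_
  simp only [rootPath, List.getElem_iterate] at heq
  simp only [rootPath, List.length_iterate] at hj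
  exact Nat.find_min (hg.exists_iterate_eq_root x) (show i < hg.hitTime x by omega)
    (hg.eq_root (iterate_mem_periodicPts_of_iterate_eq hij heq))

theorem root_mem_rootPath (x : α) : hg.root ∈ hg.rootPath x :=
  List.mem_iterate.mpr ⟨hg.hitTime x, Nat.lt_succ_self _, (hg.iterate_hitTime x).symm⟩

end IsLoopRootedTree

section Joyal

variable [Finite α] [LinearOrder α]

noncomputable def sortedPeriodicPts (f : α → α) : List α :=
  (toFinite (periodicPts f)).toFinset.sort

noncomputable def spine (f : α → α) : List α := (sortedPeriodicPts f).map f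

theorem mem_sortedPeriodicPts : x ∈ sortedPeriodicPts f ↔ x ∈ periodicPts f := by
  simp [sortedPeriodicPts]

theorem sortedPeriodicPts_eq_sort {L : List α} (h : ∀ x, x ∈ L ↔ x ∈ periodicPts f) :
    sortedPeriodicPts f = L.toFinset.sort := by
  rw [sortedPeriodicPts]
  congr 1
  ext x
  simp [h]

theorem nodup_sortedPeriodicPts (f : α → α) : (sortedPeriodicPts f).Nodup :=
  Finset.sort_nodup ..

theorem length_spine (f : α → α) : (spine f).length = (sortedPeriodicPts f).length :=
  List.length_map ..

theorem mem_spine : x ∈ spine f ↔ x ∈ periodicPts f := by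
  simp only [spine, List.mem_map, mem_sortedPeriodicPts]
  exact ⟨fun ⟨y, hy, hyx⟩ => hyx ▸ (bijOn_periodicPts f).mapsTo hy,
    fun hx => (bijOn_periodicPts f).surjOn hx⟩

theorem nodup_spine (f : α → α) : (spine f).Nodup :=
  (nodup_sortedPeriodicPts f).map_on fun _ hx _ hy =>
    (bijOn_periodicPts f).injOn (mem_sortedPeriodicPts.mp hx) (mem_sortedPeriodicPts.mp hy)

theorem spine_ne_nil [Nonempty α] (f : α → α) : spine f ≠ [] :=
  let ⟨x⟩ := ‹Nonempty α›
  List.ne_nil_of_mem (mem_spine.mpr (exists_iterate_mem_periodicPts_s1 f x).choose_spec)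

noncomputable def joyalTree (f : α → α) : α → α := (spine f).pathUpdate f

noncomputable def joyalMark [Nonempty α] (f : α → α) : α := (spine f).head (spine_ne_nil f)

theorem isLoopRootedTree_joyalTree [Nonempty α] (f : α → α) :
    IsLoopRootedTree (joyalTree f) := by
  refine isLoopRootedTree_of_isFixedPt
    (List.pathUpdate_getLast (nodup_spine f) (spine_ne_nil f)) fun x => ?_
  obtain ⟨n, hn⟩ := exists_iterate_mem_periodicPts_s1 f x
  obtain ⟨m, hm⟩ := exists_iterate_mem_of_eqOn_compl_s1 (g := joyalTree f)
    (s := {y | y ∈ spine f}) (fun y hy => List.pathUpdate_of_not_mem hy) (mem_spine.mpr hn)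
  obtain ⟨i, hi, hmi⟩ := List.mem_iff_getElem.mp hm
  refine ⟨(spine f).length - 1 - i + m, ?_⟩
  rw [iterate_add_apply, ← hmi, joyalTree,
    List.iterate_pathUpdate_getElem (nodup_spine f) (by omega), List.getLast_eq_getElem]
  congr 1
  omega

theorem rootPath_joyalTree [Nonempty α] (f : α → α) :
    (isLoopRootedTree_joyalTree f).rootPath (joyalMark f) = spine f := by
  obtain ⟨n, hn⟩ := Nat.exists_eq_add_one.mpr (List.length_pos_iff.mpr (spine_ne_nil f))
  have hpath : List.iterate (joyalTree f) (joyalMark f) (n + 1) = spine f :=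
    hn ▸ List.iterate_pathUpdate_head (nodup_spine f) (spine_ne_nil f)
  have hlast : (joyalTree f)^[n] (joyalMark f) = (spine f).getLast (spine_ne_nil f) := by
    rw [← List.getElem_iterate _ _ (n + 1) n (by simp), List.getLast_eq_getElem]
    exact List.getElem_of_eq hpath _ |>.trans (by simp only [hn, Nat.add_sub_cancel])
  have hper : (joyalTree f)^[n] (joyalMark f) ∈ periodicPts (joyalTree f) :=
    mk_mem_periodicPts one_pos (hlast ▸ List.pathUpdate_getLast (nodup_spine f) (spine_ne_nil f))
  rw [IsLoopRootedTree.rootPath, IsLoopRootedTree.hitTime_eq _ (hpath ▸ nodup_spine f) hper,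
    hpath]

namespace IsLoopRootedTree

variable (hg : IsLoopRootedTree g) (m : α)

noncomputable def joyalFun : α → α :=
  (hg.rootPath m).toFinset.sort.zipUpdate (hg.rootPath m) g

theorem length_sort_rootPath :
    (hg.rootPath m).toFinset.sort.length = (hg.rootPath m).length := by
  rw [Finset.length_sort, List.toFinset_card_of_nodup (hg.nodup_rootPath m)]

theorem mem_sort_rootPath {x : α} :
    x ∈ (hg.rootPath m).toFinset.sort ↔ x ∈ hg.rootPath m := by
  simp

theorem periodicPts_joyalFun : periodicPts (hg.joyalFun m) = {x | x ∈ hg.rootPath m} := by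
  have hset : {x | x ∈ (hg.rootPath m).toFinset.sort} = {x | x ∈ hg.rootPath m} :=
    Set.ext fun x => hg.mem_sort_rootPath m
  have hmaps : MapsTo (hg.joyalFun m) {x | x ∈ hg.rootPath m} {x | x ∈ hg.rootPath m} :=
    hset ▸ List.mapsTo_zipUpdate (hg.length_sort_rootPath m)
  refine subset_antisymm (fun x hx => ?_) (subset_periodicPts_of_injOn hmaps
    (hset ▸ List.injOn_zipUpdate (hg.nodup_rootPath m) (hg.length_sort_rootPath m)))
  obtain ⟨n, hn⟩ := hg.exists_iterate_eq_root x
  obtain ⟨k, hk⟩ := exists_iterate_mem_of_eqOn_compl_s1 (g := hg.joyalFun m)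
    (s := {x | x ∈ hg.rootPath m})
    (fun y hy => List.zipUpdate_of_not_mem fun h => hy ((hg.mem_sort_rootPath m).mp h))
    (hn ▸ hg.root_mem_rootPath m)
  exact mem_of_mapsTo_of_iterate_mem hmaps hx hk

theorem sortedPeriodicPts_joyalFun :
    sortedPeriodicPts (hg.joyalFun m) = (hg.rootPath m).toFinset.sort :=
  sortedPeriodicPts_eq_sort fun x => by rw [periodicPts_joyalFun]; rfl

theorem spine_joyalFun : spine (hg.joyalFun m) = hg.rootPath m := by
  have hsort := hg.sortedPeriodicPts_joyalFun m
  refine List.ext_getElem (by rw [spine, List.length_map, hsort, length_sort_rootPath]) ?_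
  intro i hi _
  simp only [spine, List.getElem_map, hsort]
  exact List.zipUpdate_getElem (Finset.sort_nodup ..) (hg.length_sort_rootPath m) _

theorem joyalTree_joyalFun : joyalTree (hg.joyalFun m) = g := by
  funext x
  rw [joyalTree, spine_joyalFun]
  by_cases hx : x ∈ hg.rootPath m
  · obtain ⟨i, hi, rfl⟩ := List.mem_iff_getElem.mp hx
    rcases Nat.lt_or_ge (i + 1) (hg.rootPath m).length with hlt | hge
    · rw [List.pathUpdate_getElem (hg.nodup_rootPath m) hlt, getElem_rootPath, getElem_rootPath,
        iterate_succ_apply']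
    · have hlast : i = hg.hitTime m := by rw [length_rootPath] at hge hi; omega
      have hget : (hg.rootPath m)[i] = (hg.rootPath m).getLast (List.ne_nil_of_mem hx) := by
        rw [List.getLast_eq_getElem]
        congr 1
        omega
      rw [hget, List.pathUpdate_getLast (hg.nodup_rootPath m), ← hget, getElem_rootPath, hlast,
        iterate_hitTime, hg.isFixedPt_root]
  · rw [List.pathUpdate_of_not_mem hx, joyalFun,
      List.zipUpdate_of_not_mem fun h => hx ((hg.mem_sort_rootPath m).mp h)]

theorem joyalMark_joyalFun [Nonempty α] : joyalMark (hg.joyalFun m) = m := by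
  simp only [joyalMark, List.head_eq_getElem, spine_joyalFun, getElem_rootPath,
    iterate_zero_apply]

end IsLoopRootedTree

theorem joyalFun_joyalTree [Nonempty α] (f : α → α) :
    (isLoopRootedTree_joyalTree f).joyalFun (joyalMark f) = f := by
  funext x
  rw [IsLoopRootedTree.joyalFun, rootPath_joyalTree,
    ← sortedPeriodicPts_eq_sort fun _ => mem_spine]
  by_cases hx : x ∈ sortedPeriodicPts f
  · obtain ⟨i, hi, rfl⟩ := List.mem_iff_getElem.mp hx
    rw [List.zipUpdate_getElem (nodup_sortedPeriodicPts f) (length_spine f).symm]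
    simp only [spine, List.getElem_map]
  · rw [List.zipUpdate_of_not_mem hx, joyalTree,
      List.pathUpdate_of_not_mem fun h => hx (mem_sortedPeriodicPts.mpr (mem_spine.mp h))]

variable (α) [Nonempty α] in
noncomputable def joyalEquiv : (α → α) ≃ {g : α → α // IsLoopRootedTree g} × α where
  toFun f := (⟨joyalTree f, isLoopRootedTree_joyalTree f⟩, joyalMark f)
  invFun p := p.1.2.joyalFun p.2
  left_inv := joyalFun_joyalTree
  right_inv := fun ⟨⟨_, hg⟩, m⟩ =>
    Prod.ext (Subtype.ext (hg.joyalTree_joyalFun m)) (hg.joyalMark_joyalFun m)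

end Joyal

theorem card_isLoopRootedTree_mul_card (α : Type*) [Finite α] [Nonempty α] :
    Nat.card {f : α → α // IsLoopRootedTree f} * Nat.card α = Nat.card α ^ Nat.card α := by
  let : LinearOrder α := LinearOrder.lift' _ (Finite.equivFin α).injective
  rw [← Nat.card_prod, ← Nat.card_congr (joyalEquiv α), Nat.card_fun]

end Function

/-- The probability that a uniformly random function `f : Fin n → Fin n` is a
loop-rooted tree (has exactly one cyclic point) equals `1/n`, for `n ≥ 1`. -/
theorem stmt_1 (n : ℕ) (hn : 1 ≤ n) :
    (Nat.card {f : Fin n → Fin n // ∃! x : Fin n, ∃ k : ℕ, 1 ≤ k ∧ f^[k] x = x} : ℚ) /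
      (Nat.card (Fin n → Fin n) : ℚ) = 1 / n := by
  have : NeZero n := ⟨by omega⟩
  -- `IsLoopRootedTree f` unfolds to the condition in the statement.
  have hcount : (Nat.card {f : Fin n → Fin n // IsLoopRootedTree f} : ℚ) * n = n ^ n := by
    exact_mod_cast Nat.card_fin n ▸ card_isLoopRootedTree_mul_card (Fin n)
  have hn' : (n : ℚ) ≠ 0 := by exact_mod_cast (by omega : n ≠ 0)
  rw [Nat.card_fun, Nat.card_fin, div_eq_div_iff (by positivity) hn', one_mul, Nat.cast_pow]
  exact hcount
end

section
/- A one-letter automaton given by a function f : Fin n → Fin n is synchronizable (there exist m ≥ 0 and v₀ such that f^[m] u = v₀ for all u) if and only if f has exactly one cyclic point. -/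
/-- A one-letter automaton `f : Fin n → Fin n` is synchronizable (some iterate of `f`
is constant) if and only if `f` has exactly one cyclic point. -/
theorem stmt_3 (n : ℕ) (hn : 1 ≤ n) (f : Fin n → Fin n) :
    (∃ m : ℕ, ∃ v₀ : Fin n, ∀ u : Fin n, f^[m] u = v₀) ↔
      (∃! x : Fin n, ∃ k : ℕ, 1 ≤ k ∧ f^[k] x = x) := by
  constructor
  · rintro ⟨m, v₀, hm⟩
    refine ⟨v₀, ⟨m + 1, Nat.le_add_left _ _, ?_⟩, ?_⟩
    · rw [Function.iterate_succ_apply]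
      exact hm _
    · rintro x ⟨k, hk, hx⟩
      have h1 : f^[k * m] x = x := by
        rw [Function.iterate_mul]
        exact Function.iterate_fixed hx m
      have h2 : k * m = m + (k - 1) * m := by
        obtain ⟨k', rfl⟩ := Nat.exists_eq_add_of_le hk
        have h3 : 1 + k' - 1 = k' := by omega
        rw [h3]; ring
      calc x = f^[k * m] x := h1.symm
        _ = f^[m] (f^[(k - 1) * m] x) := by rw [h2, Function.iterate_add_apply]
        _ = v₀ := hm _
  · rintro ⟨x₀, ⟨k, hk, hx₀⟩, huniq⟩
    have hfix : f x₀ = x₀ := by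
      apply huniq
      refine ⟨k, hk, ?_⟩
      rw [← Function.iterate_succ_apply, Function.iterate_succ_apply', hx₀]
    refine ⟨n, x₀, fun u => ?_⟩
    have key : ∀ i j : ℕ, i < j → f^[i] u = f^[j] u → f^[i] u = x₀ := by
      intro i j hij heq
      apply huniq
      refine ⟨j - i, by omega, ?_⟩
      rw [← Function.iterate_add_apply]
      rw [Nat.sub_add_cancel hij.le]
      exact heq.symm
    have hninj : ¬ Function.Injective (fun t : Fin (n + 1) => f^[t.1] u) := by
      intro hinj
      have := Fintype.card_le_of_injective _ hinj
      simp at this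
    rw [Function.not_injective_iff] at hninj
    obtain ⟨i, j, heq, hne⟩ := hninj
    have hx : ∃ i₀ : ℕ, i₀ ≤ n ∧ f^[i₀] u = x₀ := by
      rcases lt_or_gt_of_ne (fun h => hne (Fin.ext h) : i.1 ≠ j.1) with h | h
      · exact ⟨i.1, by omega, key _ _ h heq⟩
      · exact ⟨j.1, by omega, key _ _ h heq.symm⟩
    obtain ⟨i₀, hi₀, hi₀x⟩ := hx
    have : f^[n] u = f^[n - i₀] (f^[i₀] u) := by
      rw [← Function.iterate_add_apply, Nat.sub_add_cancel hi₀]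
    rw [this, hi₀x]
    exact Function.iterate_fixed hfix _
end

section
/- Let G be a finite directed graph on n vertices with at most h vertices of in-degree ≥ 2 and such that Σ_{v : d⁻(v) ≥ 2} d⁻(v) ≤ 2h+1. Then for any vertex u and any ℓ ≥ 1, the number of vertices from which u is reachable by a directed path of length at most ℓ is at most 1 + ℓ(2h + 1). -/
/-!
Let `B m` be the set of vertices reaching `u` by a path of length at most `m`. Every `v ≠ u`
in `B (m + 1)` has an out-neighbour in `B m`, so `|B (m + 1)| ≤ 1 + ∑_{w ∈ B m} d⁻(w)`.
Writing `d⁻(w) ≤ 1 + (d⁻(w) - 1)`, the excesses `d⁻(w) - 1` sum over the whole graph to at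
most `2h`, hence `|B (m + 1)| ≤ |B m| + 2h + 1`, and the bound follows from `|B 0| = 1`.
-/

open Finset

def ReachesWithin {V : Type*} (r : V → V → Prop) (m : ℕ) (v u : V) : Prop :=
  ∃ k ≤ m, ∃ g : ℕ → V, g 0 = v ∧ g k = u ∧ ∀ i < k, r (g i) (g (i + 1))

namespace ReachesWithin

variable {V : Type*} {r : V → V → Prop} {m : ℕ} {u v : V}

lemma eq_of_zero (h : ReachesWithin r 0 v u) : v = u := by
  obtain ⟨k, hk, g, rfl, rfl, -⟩ := h
  rw [Nat.le_zero.mp hk]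

lemma exists_rel_of_ne (h : ReachesWithin r (m + 1) v u) (hvu : v ≠ u) :
    ∃ w, r v w ∧ ReachesWithin r m w u := by
  obtain ⟨k, hk, g, rfl, hgk, hg⟩ := h
  obtain ⟨k, rfl⟩ := Nat.exists_eq_succ_of_ne_zero (show k ≠ 0 by rintro rfl; exact hvu hgk)
  exact ⟨g 1, hg 0 k.succ_pos, k, by omega, fun i => g (i + 1), rfl, hgk,
    fun i hi => hg (i + 1) (by omega)⟩

end ReachesWithin

lemma Finset.sum_tsub_one_le_of_sum_filter_two_le {ι : Type*} [Fintype ι] (f : ι → ℕ) {c : ℕ}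
    (h : ∑ i ∈ univ.filter (fun i => 2 ≤ f i), f i ≤ c + 1) : ∑ i, (f i - 1) ≤ c := by
  set big := univ.filter fun i => 2 ≤ f i
  have hsum_big : ∑ i, (f i - 1) = ∑ i ∈ big, (f i - 1) :=
    (sum_subset (subset_univ big) fun i _ hi => by simp [big] at hi; omega).symm
  have hsplit : ∑ i ∈ big, (f i - 1) + #big = ∑ i ∈ big, f i := by
    rw [card_eq_sum_ones, ← sum_add_distrib]
    exact sum_congr rfl fun i hi => by simp [big] at hi; omega
  rcases big.eq_empty_or_nonempty with hbig | hbig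
  · simp [hsum_big, hbig]
  · have := hbig.card_pos
    omega

lemma Finset.sum_le_card_add_of_sum_tsub_one_le {ι : Type*} [Fintype ι] {f : ι → ℕ} {c : ℕ}
    (h : ∑ i, (f i - 1) ≤ c) (s : Finset ι) : ∑ i ∈ s, f i ≤ #s + c :=
  calc ∑ i ∈ s, f i
      ≤ ∑ i ∈ s, (1 + (f i - 1)) := sum_le_sum fun i _ => by omega
    _ = #s + ∑ i ∈ s, (f i - 1) := by rw [sum_add_distrib, card_eq_sum_ones]
    _ ≤ #s + c := by grw [sum_le_sum_of_subset (subset_univ s), h]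

section InBall

variable {V : Type*} [Fintype V] [DecidableEq V] (r : V → V → Prop) [DecidableRel r]

lemma card_filter_exists_rel_le (s : Finset V) :
    #{v | ∃ w ∈ s, r v w} ≤ ∑ w ∈ s, #{v | r v w} := by
  have hunion : ({v | ∃ w ∈ s, r v w} : Finset V) = s.biUnion fun w => {v | r v w} := by
    ext v; simp
  exact hunion ▸ card_biUnion_le

open Classical in
lemma card_reachesWithin_succ_le (u : V) (m : ℕ) :
    #{v | ReachesWithin r (m + 1) v u} ≤ 1 + ∑ w ∈ {v | ReachesWithin r m v u}, #{v | r v w} := by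
  have hsub : ({v | ReachesWithin r (m + 1) v u} : Finset V) ⊆
      insert u ({v | ∃ w ∈ ({v | ReachesWithin r m v u} : Finset V), r v w} : Finset V) := by
    intro v hv
    rw [mem_filter] at hv
    by_cases hvu : v = u
    · exact hvu ▸ mem_insert_self v _
    obtain ⟨w, hvw, hw⟩ := hv.2.exists_rel_of_ne hvu
    exact mem_insert_of_mem (mem_filter.mpr ⟨mem_univ v, w, by simpa using hw, hvw⟩)
  calc _ ≤ #{v | ∃ w ∈ ({v | ReachesWithin r m v u} : Finset V), r v w} + 1 :=
        (card_le_card hsub).trans (card_insert_le _ _)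
    _ ≤ _ := by grw [card_filter_exists_rel_le, add_comm]

theorem card_reachesWithin_le {c : ℕ} (hexc : ∑ w, (#{v | r v w} - 1) ≤ c) (u : V) (m : ℕ) :
    Nat.card {v // ReachesWithin r m v u} ≤ 1 + m * (c + 1) := by
  classical
  rw [Nat.card_eq_fintype_card, Fintype.card_subtype]
  induction m with
  | zero =>
    simpa using card_le_one.mpr fun a ha b hb =>
      ((mem_filter.mp ha).2.eq_of_zero).trans (mem_filter.mp hb).2.eq_of_zero.symm
  | succ m ih =>
    calc _ ≤ _ := card_reachesWithin_succ_le r u m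
      _ ≤ 1 + (#{v | ReachesWithin r m v u} + c) := by
        grw [sum_le_card_add_of_sum_tsub_one_le hexc]
      _ ≤ 1 + (m + 1) * (c + 1) := by grw [ih, add_one_mul]; omega

end InBall

theorem stmt_11_general (V : Type) [Fintype V] (rel : V → V → Prop) [DecidableRel rel]
    (indeg : V → ℕ)
    (hind : ∀ v : V, indeg v = (Finset.univ.filter fun u => rel u v).card)
    (h ℓ : ℕ)
    (hsum : ∑ v ∈ Finset.univ.filter (fun v => 2 ≤ indeg v), indeg v ≤ 2 * h + 1)
    (u : V) :
    Nat.card {v : V // ∃ m ≤ ℓ, ∃ g : ℕ → V,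
        g 0 = v ∧ g m = u ∧ ∀ i < m, rel (g i) (g (i + 1))} ≤
      1 + ℓ * (2 * h + 1) := by
  classical
  obtain rfl : indeg = fun v => #{u | rel u v} := funext hind
  exact card_reachesWithin_le rel (sum_tsub_one_le_of_sum_filter_two_le _ hsum) u ℓ

/-- In-ball growth bound: in a finite directed graph with at most `h` vertices of
in-degree ≥ 2 and with `∑_{v : d⁻(v) ≥ 2} d⁻(v) ≤ 2h + 1`, for any vertex `u` and any
`ℓ ≥ 1`, the number of vertices from which `u` is reachable by a directed path of
length at most `ℓ` is at most `1 + ℓ(2h + 1)`. -/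
theorem stmt_11 (V : Type) [Fintype V] (rel : V → V → Prop) [DecidableRel rel]
    (indeg : V → ℕ)
    (hind : ∀ v : V, indeg v = (Finset.univ.filter fun u => rel u v).card)
    (h ℓ : ℕ) (hℓ : 1 ≤ ℓ)
    (hnum : (Finset.univ.filter fun v => 2 ≤ indeg v).card ≤ h)
    (hsum : ∑ v ∈ Finset.univ.filter (fun v => 2 ≤ indeg v), indeg v ≤ 2 * h + 1)
    (u : V) :
    Nat.card {v : V // ∃ m ≤ ℓ, ∃ g : ℕ → V,
        g 0 = v ∧ g m = u ∧ ∀ i < m, rel (g i) (g (i + 1))} ≤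
      1 + ℓ * (2 * h + 1) :=
  stmt_11_general V rel indeg hind h ℓ hsum u
end

section
/- Let g : Fin n → Fin n (n ≥ 1) have a unique cyclic point v₀. Then g^[n] is the constant function with value v₀. -/
/-- If `g : Fin n → Fin n` (with `n ≥ 1`) has a unique cyclic point `v₀`, then
`g^[n]` is the constant function with value `v₀`. -/
theorem stmt_18 (n : ℕ) (hn : 1 ≤ n) (g : Fin n → Fin n) (v₀ : Fin n)
    (hcyc : ∃ k : ℕ, 1 ≤ k ∧ g^[k] v₀ = v₀)
    (huniq : ∀ x : Fin n, (∃ k : ℕ, 1 ≤ k ∧ g^[k] x = x) → x = v₀) :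
    ∀ u : Fin n, g^[n] u = v₀ := by
  obtain ⟨k, hk1, hkv⟩ := hcyc
  have hfix : g v₀ = v₀ := by
    apply huniq
    refine ⟨k, hk1, ?_⟩
    have h : g^[k] (g v₀) = g (g^[k] v₀) := by
      rw [← Function.iterate_succ_apply, Function.iterate_succ_apply']
    rw [h, hkv]
  have hfixiter : ∀ m : ℕ, g^[m] v₀ = v₀ := by
    intro m
    induction m with
    | zero => rfl
    | succ m ih => rw [Function.iterate_succ_apply', ih, hfix]
  intro u
  have hni : ¬ Function.Injective (fun i : Fin (n+1) => g^[(i : ℕ)] u) := by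
    intro hinj
    have := Fintype.card_le_of_injective _ hinj
    simp at this
  rw [Function.not_injective_iff] at hni
  obtain ⟨i, j, hij, hne⟩ := hni
  have key : ∀ a b : Fin (n+1), (a:ℕ) < (b:ℕ) → g^[(a:ℕ)] u = g^[(b:ℕ)] u →
      g^[n] u = v₀ := by
    intro a b hab heq
    have hcyc' : g^[(a:ℕ)] u = v₀ := by
      apply huniq
      refine ⟨(b:ℕ) - (a:ℕ), by omega, ?_⟩
      rw [← Function.iterate_add_apply]
      rw [show (b:ℕ) - (a:ℕ) + (a:ℕ) = (b:ℕ) by omega]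
      exact heq.symm
    have hale : (a:ℕ) ≤ n := by omega
    calc g^[n] u = g^[n - (a:ℕ)] (g^[(a:ℕ)] u) := by
          rw [← Function.iterate_add_apply]
          congr 1; omega
      _ = v₀ := by rw [hcyc', hfixiter]
  rcases lt_or_gt_of_ne (fun h : (i:ℕ) = (j:ℕ) => hne (Fin.ext h)) with h | h
  · exact key i j h hij
  · exact key j i h hij.symm
end
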